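/- arXiv:1310.2525 — 5 statements merged into one kernel-verified Lean document; each statement's English description precedes it below -/
import Mathlib

section
/- Let A be a real d×d matrix that is normal (A·Aᵀ = Aᵀ·A) and let γ > 0 be such that every eigenvalue μ of the complexification of A satisfies Re(μ) ≤ −γ. Then for every t ≥ 0, the operator norm of exp(tA) satisfies ‖exp(tA)‖ ≤ e^{−γt}. -/
open MeasureTheory ProbabilityTheory Matrix Filter Set
open scoped RealInnerProductSpace

noncomputable section

/-- A real square matrix is Hurwitz if every eigenvalue of its complexification
has strictly negative real part. -/
def IsHurwitz {n : Type*} [Fintype n] [DecidableEq n] (A : Matrix n n ℝ) : Prop :=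
  ∀ μ ∈ spectrum ℂ (A.map (Complex.ofReal : ℝ → ℂ)), μ.re < 0

/-- The operator norm of a real matrix induced by the Euclidean norm on `ℝ^d`. -/
def eopNorm {d : ℕ} (A : Matrix (Fin d) (Fin d) ℝ) : ℝ :=
  ‖Matrix.toEuclideanCLM (𝕜 := ℝ) A‖

/-- A matrix acting on Euclidean space. -/
def applyM {d : ℕ} (A : Matrix (Fin d) (Fin d) ℝ) (x : EuclideanSpace ℝ (Fin d)) :
    EuclideanSpace ℝ (Fin d) :=
  Matrix.toEuclideanCLM (𝕜 := ℝ) A x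


/-! Complexify: the operator norm of a real matrix is at most that of its complexification, and
complexification commutes with `exp`. The complexification `b` of `A` is a normal element of the
C⋆-algebra of operators on `ℂ^d`, so `exp (t • b)` is given by the continuous functional calculus
and its norm is the supremum of `|exp (t μ)| = exp (t Re μ) ≤ exp (-γ t)` over its spectrum. -/

open NormedSpace in
theorem IsStarNormal.norm_exp_smul_le {𝒜 : Type*} [CStarAlgebra 𝒜] (a : 𝒜) [IsStarNormal a]
    {γ t : ℝ} (ht : 0 ≤ t) (ha : ∀ μ ∈ spectrum ℂ a, μ.re ≤ -γ) :
    ‖exp ((t : ℂ) • a)‖ ≤ Real.exp (-γ * t) := by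
  rw [← CFC.complex_exp_eq_normedSpace_exp, ← cfc_comp_smul (t : ℂ) Complex.exp a]
  refine norm_cfc_le (Real.exp_nonneg _) fun μ hμ => ?_
  rw [Complex.norm_exp, smul_eq_mul, Complex.re_ofReal_mul, mul_comm]
  exact Real.exp_le_exp.mpr (mul_le_mul_of_nonneg_right (ha μ hμ) ht)

namespace Matrix

variable {n : Type*} [Fintype n] [DecidableEq n]

theorem isStarNormal_map_ofReal {A : Matrix n n ℝ} (hA : A * Aᵀ = Aᵀ * A) :
    IsStarNormal (A.map Complex.ofReal) := by
  refine ⟨?_⟩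
  change Commute (star (Complex.ofRealHom.mapMatrix A)) (Complex.ofRealHom.mapMatrix A)
  have hstar : (Complex.ofRealHom.mapMatrix A)ᴴ = Complex.ofRealHom.mapMatrix Aᵀ := by
    ext i j
    simp
  rw [commute_iff_eq, star_eq_conjTranspose, hstar, ← map_mul, ← map_mul, hA]

theorem norm_toEuclideanCLM_le_map_ofReal (M : Matrix n n ℝ) :
    ‖toEuclideanCLM (𝕜 := ℝ) M‖ ≤ ‖toEuclideanCLM (𝕜 := ℂ) (M.map Complex.ofReal)‖ := by
  let complexify (x : EuclideanSpace ℝ n) : EuclideanSpace ℂ n := WithLp.toLp 2 fun i => (x i : ℂ)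
  have norm_complexify (x : EuclideanSpace ℝ n) : ‖complexify x‖ = ‖x‖ := by
    simp [complexify, EuclideanSpace.norm_eq]
  have apply_complexify (x : EuclideanSpace ℝ n) :
      toEuclideanCLM (𝕜 := ℂ) (M.map Complex.ofReal) (complexify x) =
        complexify (toEuclideanCLM (𝕜 := ℝ) M x) := by
    ext i
    simp [complexify, toEuclideanCLM_toLp, mulVec, dotProduct]
  refine ContinuousLinearMap.opNorm_le_bound _ (norm_nonneg _) fun x => ?_
  calc ‖toEuclideanCLM (𝕜 := ℝ) M x‖
      = ‖toEuclideanCLM (𝕜 := ℂ) (M.map Complex.ofReal) (complexify x)‖ := by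
        rw [apply_complexify, norm_complexify]
    _ ≤ ‖toEuclideanCLM (𝕜 := ℂ) (M.map Complex.ofReal)‖ * ‖x‖ := by
        simpa only [norm_complexify] using ContinuousLinearMap.le_opNorm _ (complexify x)

theorem toEuclideanCLM_map_ofReal_exp (M : Matrix n n ℝ) :
    toEuclideanCLM (𝕜 := ℂ) ((NormedSpace.exp M).map Complex.ofReal) =
      NormedSpace.exp (toEuclideanCLM (𝕜 := ℂ) (M.map Complex.ofReal)) := by
  -- `exp` only depends on the topology; any matrix norm makes `NormedSpace.map_exp` applicable.
  let _ : NormedRing (Matrix n n ℝ) := Matrix.linftyOpNormedRing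
  let _ : NormedAlgebra ℝ (Matrix n n ℝ) := Matrix.linftyOpNormedAlgebra
  let _ : NormedAlgebra ℚ (Matrix n n ℝ) := NormedAlgebra.restrictScalars ℚ ℝ _
  let φ : Matrix n n ℝ →ₐ[ℝ] (EuclideanSpace ℂ n →L[ℂ] EuclideanSpace ℂ n) :=
    ((toEuclideanCLM (n := n) (𝕜 := ℂ)).toAlgEquiv.toAlgHom.restrictScalars ℝ).comp
      Complex.ofRealAm.mapMatrix
  exact NormedSpace.map_exp φ φ.toLinearMap.continuous_of_finiteDimensional M

end Matrix

theorem normal_exp_bound_general {d : ℕ} (A : Matrix (Fin d) (Fin d) ℝ)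
    (hnormal : A * Aᵀ = Aᵀ * A) (γ : ℝ)
    (hspec : ∀ μ ∈ spectrum ℂ (A.map (Complex.ofReal : ℝ → ℂ)), μ.re ≤ -γ) :
    ∀ t : ℝ, 0 ≤ t → eopNorm (NormedSpace.exp (t • A)) ≤ Real.exp (-γ * t) := by
  intro t ht
  have hspec_b : ∀ μ ∈ spectrum ℂ (toEuclideanCLM (𝕜 := ℂ) (A.map Complex.ofReal)), μ.re ≤ -γ := by
    rwa [AlgEquiv.spectrum_eq]
  have := isStarNormal_map_ofReal hnormal
  set b := toEuclideanCLM (𝕜 := ℂ) (A.map Complex.ofReal)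
  have hmap_smul : (t • A).map Complex.ofReal = (t : ℂ) • A.map Complex.ofReal := by
    ext
    simp
  calc eopNorm (NormedSpace.exp (t • A))
      ≤ ‖toEuclideanCLM (𝕜 := ℂ) ((NormedSpace.exp (t • A)).map Complex.ofReal)‖ :=
        norm_toEuclideanCLM_le_map_ofReal _
    _ = ‖NormedSpace.exp ((t : ℂ) • b)‖ := by
        rw [toEuclideanCLM_map_ofReal_exp, hmap_smul, map_smul]
    _ ≤ Real.exp (-γ * t) := IsStarNormal.norm_exp_smul_le b ht hspec_b

/-- If `A` is normal and all eigenvalues of its complexification have real part at most `-γ`,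
then `‖exp(t A)‖ ≤ e^{-γ t}` for all `t ≥ 0`. -/
theorem normal_exp_bound {d : ℕ} (A : Matrix (Fin d) (Fin d) ℝ)
    (hnormal : A * Aᵀ = Aᵀ * A) (γ : ℝ) (hγ : 0 < γ)
    (hspec : ∀ μ ∈ spectrum ℂ (A.map (Complex.ofReal : ℝ → ℂ)), μ.re ≤ -γ) :
    ∀ t : ℝ, 0 ≤ t → eopNorm (NormedSpace.exp (t • A)) ≤ Real.exp (-γ * t) :=
  normal_exp_bound_general A hnormal γ hspec
end
end

section
/- Let E be a finite set, let {A_i}_{i∈E} be pairwise commuting real d×d matrices, and let (π_i)_{i∈E} be nonnegative reals with Σ_{i∈E} π_i = 1 such that the average matrix Ā = Σ_{i∈E} π_i A_i is Hurwitz. Let I : [0,∞) → E be a measurable switching signal such that for each i ∈ E the occupation fraction (1/t)∫_0^t 1_{I_s=i} ds converges to π_i as t → ∞. Then for every x_0 ∈ ℝ^d, the solution X_t = exp( Σ_{i∈E} (∫_0^t 1_{I_s=i} ds) A_i ) x_0 of the switched linear ODE Ẋ_t = A_{I_t} X_t satisfies ‖X_t‖ → 0 as t → ∞. -/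
open MeasureTheory ProbabilityTheory Matrix Filter Set
open scoped RealInnerProductSpace

noncomputable section

/-!
Since the `A i` commute, `exp (∑ τᵢ(t) Aᵢ) = exp (t Ā) * exp R(t)` with
`R(t) = ∑ (τᵢ(t) - t πᵢ) Aᵢ`, where `τᵢ(t)` is the occupation time of state `i`. The occupation
hypothesis says `R(t) = o(t)`, so `‖exp R(t)‖ ≤ exp ‖R(t)‖` grows subexponentially. On the other
hand `‖exp (t Ā)‖` decays exponentially: in finite dimension the spectrum of `exp Ā` is the image
under `exp` of the spectrum of `Ā`, hence lies in the open unit disc when `Ā` is Hurwitz, and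
Gelfand's formula turns this into geometric decay of `‖(exp Ā) ^ n‖`.
-/

open NormedSpace Asymptotics Topology

theorem NormedSpace.norm_exp_le_exp_norm {𝔸 : Type*} [NormedRing 𝔸] [NormedAlgebra ℝ 𝔸]
    [NormOneClass 𝔸] (x : 𝔸) : ‖exp x‖ ≤ Real.exp ‖x‖ := by
  rw [exp_eq_tsum ℝ, Real.exp_eq_exp_ℝ, exp_eq_tsum ℝ]
  refine (norm_tsum_le_tsum_norm (norm_expSeries_summable' x)).trans ?_
  refine Summable.tsum_le_tsum (fun n => ?_) (norm_expSeries_summable' x)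
    (expSeries_summable' ‖x‖)
  rw [norm_smul, smul_eq_mul, norm_inv, RCLike.norm_natCast]
  gcongr
  exact norm_pow_le x n

theorem Module.End.HasEigenvalue.exists_hasEigenvector_of_commute {K V : Type*} [Field K]
    [IsAlgClosed K] [AddCommGroup V] [Module K V] [FiniteDimensional K V] {f g : End K V} {μ : K}
    (hμ : g.HasEigenvalue μ) (hfg : Commute f g) :
    ∃ ν v, f.HasEigenvector ν v ∧ g.HasEigenvector μ v := by
  have : Nontrivial (g.eigenspace μ) := Submodule.nontrivial_iff_ne_bot.mpr hμ
  obtain ⟨ν, hν⟩ := exists_eigenvalue (f.restrict (mapsTo_genEigenspace_of_comm hfg.symm μ 1))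
  obtain ⟨w, hw⟩ := hν.exists_hasEigenvector
  refine ⟨ν, w, ⟨?_, ?_⟩, w.2, ?_⟩
  · rw [mem_eigenspace_iff]
    exact congr_arg Subtype.val (mem_eigenspace_iff.mp hw.1)
  all_goals simpa using hw.2

theorem spectrum.mem_iff_hasEigenvalue_lmul {K A : Type*} [Field K] [Ring A] [Algebra K A]
    [FiniteDimensional K A] {a : A} {μ : K} :
    μ ∈ spectrum K a ↔ (Algebra.lmul K A a).HasEigenvalue μ := by
  rw [Module.End.hasEigenvalue_iff_mem_spectrum, spectrum.mem_iff, spectrum.mem_iff,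
    ← Algebra.lmul_isUnit_iff (R := K), map_sub, AlgHom.commutes]

section BanachAlgebra

variable {𝔸 : Type*} [NormedRing 𝔸] [NormedAlgebra ℂ 𝔸] [CompleteSpace 𝔸]

theorem exists_norm_pow_le_of_spectralRadius_lt {a : 𝔸} {r : ℝ}
    (hr : spectralRadius ℂ a < ENNReal.ofReal r) : ∃ C, ∀ n : ℕ, ‖a ^ n‖ ≤ C * r ^ n := by
  have hr0 : 0 < r := ENNReal.ofReal_pos.mp (zero_le.trans_lt hr)
  have hev : ∀ᶠ n : ℕ in atTop, ‖a ^ n‖ ≤ 1 * ‖r ^ n‖ := by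
    filter_upwards [(spectrum.pow_norm_pow_one_div_tendsto_nhds_spectralRadius a).eventually_lt_const
      hr, eventually_ge_atTop 1] with n hn hn1
    rw [ENNReal.ofReal_lt_ofReal_iff hr0, one_div, Real.rpow_inv_lt_iff_of_pos (norm_nonneg _)
      hr0.le (by positivity), Real.rpow_natCast] at hn
    rw [one_mul, Real.norm_of_nonneg (by positivity)]
    exact hn.le
  obtain ⟨C, hC⟩ := (isBigO_nat_atTop_iff fun n h => absurd h (pow_ne_zero n hr0.ne')).mp
    (IsBigO.of_bound 1 hev)
  exact ⟨C, fun n => by simpa [abs_of_pos hr0] using hC n⟩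

variable [NormedAlgebra ℚ 𝔸]

theorem exp_mul_eq_smul_of_mul_eq_smul {a x : 𝔸} {z : ℂ} (h : a * x = z • x) :
    exp a * x = exp z • x := by
  have hx : SemiconjBy x (algebraMap ℂ 𝔸 z) a := by
    rw [SemiconjBy, h, ← Algebra.commutes, Algebra.smul_def]
  rw [← hx.exp_right, ← algebraMap_exp_comm, ← Algebra.commutes, Algebra.smul_def]

theorem spectrum_exp_eq_image [FiniteDimensional ℂ 𝔸] (a : 𝔸) :
    spectrum ℂ (exp a) = exp '' spectrum ℂ a := by
  refine subset_antisymm (fun μ hμ => ?_) (image_subset_iff.2 fun z => spectrum.exp_mem_exp a)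
  have hcomm : Commute (Algebra.lmul ℂ 𝔸 a) (Algebra.lmul ℂ 𝔸 (exp a)) :=
    (Commute.refl a).exp_right.map _
  obtain ⟨ν, x, hν, hμx⟩ :=
    (spectrum.mem_iff_hasEigenvalue_lmul.mp hμ).exists_hasEigenvector_of_commute hcomm
  refine ⟨ν, spectrum.mem_iff_hasEigenvalue_lmul.mpr
    (Module.End.hasEigenvalue_of_hasEigenvector hν), ?_⟩
  have hνx : exp a * x = exp ν • x := exp_mul_eq_smul_of_mul_eq_smul hν.apply_eq_smul
  exact smul_left_injective ℂ hμx.2 (hνx.symm.trans hμx.apply_eq_smul)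

theorem spectralRadius_exp_lt_one_of_re_neg [FiniteDimensional ℂ 𝔸] [Nontrivial 𝔸] {a : 𝔸}
    (ha : ∀ z ∈ spectrum ℂ a, z.re < 0) : spectralRadius ℂ (exp a) < 1 := by
  refine ENNReal.coe_one ▸ spectrum.spectralRadius_lt_of_forall_lt (exp a) ?_
  rw [spectrum_exp_eq_image]
  rintro _ ⟨z, hz, rfl⟩
  rw [← NNReal.coe_lt_coe, coe_nnnorm, ← Complex.exp_eq_exp_ℂ, Complex.norm_exp, NNReal.coe_one,
    Real.exp_lt_one_iff]
  exact ha z hz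

variable [NormOneClass 𝔸]

theorem exists_norm_exp_smul_le_of_spectralRadius_exp_lt_one {b : 𝔸}
    (hb : spectralRadius ℂ (exp b) < 1) :
    ∃ β > 0, ∃ C, ∀ t : ℝ, 0 ≤ t → ‖exp ((t : ℂ) • b)‖ ≤ C * Real.exp (-β * t) := by
  obtain ⟨r, -, hρr, hr1⟩ := ENNReal.lt_iff_exists_real_btwn.mp hb
  have hr0 : 0 < r := ENNReal.ofReal_pos.mp (zero_le.trans_lt hρr)
  have hlog : Real.log r < 0 := Real.log_neg hr0 (by simpa using hr1)
  obtain ⟨C, hC⟩ := exists_norm_pow_le_of_spectralRadius_lt hρr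
  have hC0 : 0 ≤ C := zero_le_one.trans (by simpa using hC 0)
  refine ⟨-Real.log r, neg_pos.mpr hlog, C * Real.exp (-Real.log r) * Real.exp ‖b‖,
    fun t ht => ?_⟩
  set n := ⌊t⌋₊
  have hsplit : exp ((t : ℂ) • b) = exp b ^ n * exp (((t - n : ℝ) : ℂ) • b) := by
    rw [← NormedSpace.exp_nsmul, ← Nat.cast_smul_eq_nsmul ℂ,
      ← NormedSpace.exp_add_of_commute (((Commute.refl b).smul_left _).smul_right _), ← add_smul]
    push_cast
    rw [add_sub_cancel]
  have hpow : r ^ n ≤ Real.exp (-Real.log r) * Real.exp (-(-Real.log r) * t) := by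
    rw [← Real.exp_log hr0, ← Real.exp_nat_mul, ← Real.exp_add, Real.log_exp]
    gcongr
    nlinarith [Nat.lt_floor_add_one t]
  have hfrac : ‖exp (((t - n : ℝ) : ℂ) • b)‖ ≤ Real.exp ‖b‖ := by
    refine (NormedSpace.norm_exp_le_exp_norm _).trans (Real.exp_le_exp.2 ?_)
    rw [norm_smul, Complex.norm_real, Real.norm_of_nonneg (sub_nonneg.2 (Nat.floor_le ht))]
    exact mul_le_of_le_one_left (norm_nonneg _) (by linarith [Nat.lt_floor_add_one t])
  calc ‖exp ((t : ℂ) • b)‖ ≤ ‖exp b ^ n‖ * ‖exp (((t - n : ℝ) : ℂ) • b)‖ :=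
        hsplit ▸ norm_mul_le _ _
    _ ≤ C * r ^ n * Real.exp ‖b‖ := by gcongr; exact hC n
    _ ≤ C * (Real.exp (-Real.log r) * Real.exp (-(-Real.log r) * t)) * Real.exp ‖b‖ := by
      gcongr
    _ = _ := by ring

theorem tendsto_exp_smul_add_of_isLittleO {b : 𝔸} {R : ℝ → 𝔸}
    (hb : spectralRadius ℂ (exp b) < 1) (hR : R =o[atTop] id) (hcomm : ∀ t, Commute b (R t)) :
    Tendsto (fun t : ℝ => exp ((t : ℂ) • b + R t)) atTop (𝓝 0) := by
  obtain ⟨β, hβ, C, hC⟩ := exists_norm_exp_smul_le_of_spectralRadius_exp_lt_one hb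
  have hdecay : Tendsto (fun t : ℝ => C * Real.exp (-(β / 2 * t))) atTop (𝓝 0) := by
    simpa using (Real.tendsto_exp_neg_atTop_nhds_zero.comp
      (tendsto_id.const_mul_atTop (half_pos hβ))).const_mul C
  refine squeeze_zero_norm' ?_ hdecay
  filter_upwards [hR.bound (half_pos hβ), eventually_ge_atTop 0] with t hRt ht
  rw [id, Real.norm_of_nonneg ht] at hRt
  calc ‖exp ((t : ℂ) • b + R t)‖ ≤ ‖exp ((t : ℂ) • b)‖ * ‖exp (R t)‖ := by
        rw [NormedSpace.exp_add_of_commute ((hcomm t).smul_left _)]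
        exact norm_mul_le _ _
    _ ≤ C * Real.exp (-β * t) * Real.exp (β / 2 * t) :=
        mul_le_mul (hC t ht) ((NormedSpace.norm_exp_le_exp_norm _).trans (Real.exp_le_exp.2 hRt))
          (norm_nonneg _) ((norm_nonneg _).trans (hC t ht))
    _ = C * Real.exp (-(β / 2 * t)) := by
        rw [mul_assoc, ← Real.exp_add]
        ring_nf

end BanachAlgebra

section MatrixExp

-- Any norm would do; the statements below do not depend on it.
attribute [local instance] Matrix.linftyOpNormedRing Matrix.linftyOpNormedAlgebra

theorem IsHurwitz.tendsto_exp_smul_add_sum_smul {n ι : Type*} [Fintype n] [DecidableEq n]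
    [Fintype ι] {B : Matrix n n ℝ} (hB : IsHurwitz B) {A : ι → Matrix n n ℝ}
    (hA : ∀ i, Commute B (A i)) {c : ι → ℝ → ℝ} (hc : ∀ i, c i =o[atTop] id) :
    Tendsto (fun t : ℝ => exp (t • B + ∑ i, c i t • A i)) atTop (𝓝 0) := by
  cases isEmpty_or_nonempty n
  · exact tendsto_const_nhds.congr fun _ => Subsingleton.elim _ _
  let Φ : Matrix n n ℝ →ₐ[ℝ] Matrix n n ℂ := Complex.ofRealAm.mapMatrix
  have hΦ : Continuous Φ := continuous_id.matrix_map Complex.continuous_ofReal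
  have hR : (fun t => ∑ i, c i t • Φ (A i)) =o[atTop] (id : ℝ → ℝ) := by
    refine IsLittleO.fun_sum fun i _ => ?_
    have hconst : (fun _ : ℝ => Φ (A i)) =O[atTop] fun _ => (1 : ℝ) :=
      isBigO_const_const _ one_ne_zero _
    simpa [Function.id_def] using (hc i).smul_isBigO hconst
  have hlim := tendsto_exp_smul_add_of_isLittleO (spectralRadius_exp_lt_one_of_re_neg hB) hR
    fun t => Commute.sum_right _ _ _ fun i _ => ((hA i).map Φ).smul_right _
  refine (((continuous_id.matrix_map Complex.continuous_re).tendsto 0).comp hlim).congr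
    fun t => ?_
  have hre : ∀ M, (Φ M).map Complex.re = M := fun M => by ext; simp [Φ]
  rw [Function.comp_apply, id, ← hre (exp _)]
  -- `erw`: `map_exp` is stated for the topology of the norm, the goal for the product topology
  erw [NormedSpace.map_exp Φ hΦ]
  simp only [map_add, map_sum, map_smul, Complex.coe_smul]
  rfl

end MatrixExp

theorem isLittleO_sub_mul_of_tendsto_inv_mul {f : ℝ → ℝ} {p : ℝ}
    (h : Tendsto (fun t => (1 / t) * f t) atTop (𝓝 p)) :
    (fun t => f t - t * p) =o[atTop] id := by
  rw [isLittleO_iff_tendsto' (g := id) ((eventually_ne_atTop 0).mono fun t ht h0 => absurd h0 ht)]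
  refine (sub_self p ▸ h.sub_const p).congr' ?_
  filter_upwards [eventually_ne_atTop 0] with t ht
  rw [id, sub_div, mul_div_cancel_left₀ p ht, one_div_mul_eq_div]

theorem continuous_applyM {d : ℕ} (x : EuclideanSpace ℝ (Fin d)) :
    Continuous fun A : Matrix (Fin d) (Fin d) ℝ => applyM A x :=
  (LinearMap.continuous_of_finiteDimensional
    (Matrix.toEuclideanCLM (𝕜 := ℝ) (n := Fin d)).toAlgEquiv.toLinearMap).clm_apply
    continuous_const

theorem commuting_case_general {d : ℕ} {E : Type*} [Fintype E] [DecidableEq E]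
    (A : E → Matrix (Fin d) (Fin d) ℝ) (hcomm : ∀ i j, A i * A j = A j * A i)
    (π : E → ℝ)
    (hbar : IsHurwitz (∑ i, π i • A i))
    (I : ℝ → E)
    (hocc : ∀ i, Tendsto
      (fun t : ℝ => (1 / t) * ∫ s in Set.Ioc (0 : ℝ) t, (if I s = i then (1 : ℝ) else 0))
      atTop (nhds (π i)))
    (x₀ : EuclideanSpace ℝ (Fin d)) :
    Tendsto (fun t : ℝ => ‖applyM (NormedSpace.exp
        (∑ i, (∫ s in Set.Ioc (0 : ℝ) t, (if I s = i then (1 : ℝ) else 0)) • A i)) x₀‖)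
      atTop (nhds 0) := by
  set τ : E → ℝ → ℝ := fun i t => ∫ s in Ioc 0 t, if I s = i then 1 else 0
  have hsplit : ∀ t, ∑ i, τ i t • A i = t • ∑ i, π i • A i + ∑ i, (τ i t - t * π i) • A i := by
    intro t
    simp only [Finset.smul_sum, smul_smul, ← Finset.sum_add_distrib, ← add_smul]
    congr! 2
    ring
  have hA : ∀ i, Commute (∑ j, π j • A j) (A i) :=
    fun i => Commute.sum_left _ _ _ fun j _ => Commute.smul_left (hcomm j i) _
  have hexp : Tendsto (fun t => exp (∑ i, τ i t • A i)) atTop (𝓝 0) := by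
    simp_rw [hsplit]
    exact hbar.tendsto_exp_smul_add_sum_smul hA
      fun i => isLittleO_sub_mul_of_tendsto_inv_mul (hocc i)
  simpa [applyM, Function.comp_def] using ((continuous_applyM x₀).norm.tendsto 0).comp hexp

/-- Commuting case: if the `A i` commute, the average matrix is Hurwitz, and the occupation
fractions of the switching signal converge to the weights `π i`, then the switched solution
tends to zero. -/
theorem commuting_case {d : ℕ} {E : Type*} [Fintype E] [DecidableEq E]
    (A : E → Matrix (Fin d) (Fin d) ℝ) (hcomm : ∀ i j, A i * A j = A j * A i)
    (π : E → ℝ) (hπ : ∀ i, 0 ≤ π i) (hsum : ∑ i, π i = 1)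
    (hbar : IsHurwitz (∑ i, π i • A i))
    (I : ℝ → E) (hmeas : ∀ i, MeasurableSet {s : ℝ | I s = i})
    (hocc : ∀ i, Tendsto
      (fun t : ℝ => (1 / t) * ∫ s in Set.Ioc (0 : ℝ) t, (if I s = i then (1 : ℝ) else 0))
      atTop (nhds (π i)))
    (x₀ : EuclideanSpace ℝ (Fin d)) :
    Tendsto (fun t : ℝ => ‖applyM (NormedSpace.exp
        (∑ i, (∫ s in Set.Ioc (0 : ℝ) t, (if I s = i then (1 : ℝ) else 0)) • A i)) x₀‖)
      atTop (nhds 0) :=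
  commuting_case_general A hcomm π hbar I hocc x₀
end
end

section
/- Let E be a finite set and let {A_i}_{i∈E} be pairwise commuting real d×d matrices, each of which is Hurwitz. Then for any nonnegative reals (π_i)_{i∈E} with Σ_{i∈E} π_i = 1, the convex combination Σ_{i∈E} π_i A_i is Hurwitz. -/
open MeasureTheory ProbabilityTheory Matrix Filter Set
open scoped RealInnerProductSpace

noncomputable section

/-! The complexified matrices `Aᵢ` generate a closed commutative subalgebra `S` of a complex
Banach algebra. By Gelfand theory every `μ` in the spectrum of `∑ πᵢ Aᵢ` equals
`φ (∑ πᵢ Aᵢ) = ∑ πᵢ φ Aᵢ` for a character `φ` of `S`, and `φ Aᵢ` lies in the spectrum of `Aᵢ`: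
a finite spectrum has connected complement, so it does not grow on passing to a closed
subalgebra. Hence `μ` is a convex combination of points of the open left half-plane. -/

section BanachAlgebra

variable {A : Type*} [NormedRing A] [NormedAlgebra ℂ A] [CompleteSpace A]

lemma Subalgebra.spectrum_eq_of_finite (S : Subalgebra ℂ A) [IsClosed (S : Set A)] (x : S)
    (hx : (spectrum ℂ (x : A)).Finite) : spectrum ℂ x = spectrum ℂ (x : A) :=
  Subalgebra.spectrum_eq_of_isPreconnected_compl S x
    (hx.countable.isConnected_compl_of_one_lt_rank (by simp)).isPreconnected

abbrev Subalgebra.normedCommRingTopologicalClosureAdjoinOfComm {s : Set A}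
    (hs : ∀ a ∈ s, ∀ b ∈ s, a * b = b * a) :
    NormedCommRing (Algebra.adjoin ℂ s).topologicalClosure :=
  { (inferInstance : NormedRing (Algebra.adjoin ℂ s).topologicalClosure) with
    mul_comm := fun x y => Subtype.ext <|
      Set.centralizer_centralizer_comm_of_comm hs _
        (Subalgebra.topologicalClosure_adjoin_le_centralizer_centralizer ℂ s x.2) _
        (Subalgebra.topologicalClosure_adjoin_le_centralizer_centralizer ℂ s y.2) }

theorem exists_mem_spectrum_of_mem_spectrum_sum_smul {E : Type*} [Fintype E] {b : E → A}
    (hcomm : ∀ i j, Commute (b i) (b j)) (hfin : ∀ i, (spectrum ℂ (b i)).Finite) (c : E → ℂ)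
    {μ : ℂ} (hμ : μ ∈ spectrum ℂ (∑ i, c i • b i)) :
    ∃ ν : E → ℂ, (∀ i, ν i ∈ spectrum ℂ (b i)) ∧ μ = ∑ i, c i * ν i := by
  set S := (Algebra.adjoin ℂ (range b)).topologicalClosure
  let : NormedCommRing S := Subalgebra.normedCommRingTopologicalClosureAdjoinOfComm <| by
    rintro _ ⟨i, rfl⟩ _ ⟨j, rfl⟩
    exact hcomm i j
  have hS : IsClosed (S : Set A) := Subalgebra.isClosed_topologicalClosure _
  have : CompleteSpace S := hS.completeSpace_coe
  let b' : E → S := fun i =>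
    ⟨b i, Subalgebra.le_topologicalClosure _ (Algebra.subset_adjoin (mem_range_self i))⟩
  have hμ' : μ ∈ spectrum ℂ (∑ i, c i • b' i) :=
    spectrum.subset_subalgebra (∑ i, c i • b' i) (by simpa [b'] using hμ)
  obtain ⟨φ, rfl⟩ := WeakDual.CharacterSpace.mem_spectrum_iff_exists.mp hμ'
  refine ⟨fun i => φ (b' i), fun i => ?_, by simp [map_sum]⟩
  rw [← Subalgebra.spectrum_eq_of_finite S (b' i) (hfin i)]
  exact AlgHom.apply_mem_spectrum φ (b' i)

end BanachAlgebra

theorem Matrix.exists_mem_spectrum_of_mem_spectrum_sum_smul {n E : Type*} [Fintype n]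
    [DecidableEq n] [Fintype E] {B : E → Matrix n n ℂ} (hcomm : ∀ i j, Commute (B i) (B j))
    (c : E → ℂ) {μ : ℂ} (hμ : μ ∈ spectrum ℂ (∑ i, c i • B i)) :
    ∃ ν : E → ℂ, (∀ i, ν i ∈ spectrum ℂ (B i)) ∧ μ = ∑ i, c i * ν i :=
  letI := Matrix.linftyOpNormedRing (n := n) (α := ℂ)
  letI := Matrix.linftyOpNormedAlgebra (R := ℂ) (n := n) (α := ℂ)
  haveI := FiniteDimensional.complete ℂ (Matrix n n ℂ)
  _root_.exists_mem_spectrum_of_mem_spectrum_sum_smul hcomm (fun _ => Matrix.finite_spectrum _)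
    c hμ

/-- A convex combination of pairwise commuting Hurwitz matrices is Hurwitz. -/
theorem commuting_convex_combination_hurwitz {d : ℕ} {E : Type*} [Fintype E]
    (A : E → Matrix (Fin d) (Fin d) ℝ) (hcomm : ∀ i j, A i * A j = A j * A i)
    (hhur : ∀ i, IsHurwitz (A i))
    (π : E → ℝ) (hπ : ∀ i, 0 ≤ π i) (hsum : ∑ i, π i = 1) :
    IsHurwitz (∑ i, π i • A i) := by
  intro μ hμ
  have hmap : (∑ i, π i • A i).map Complex.ofReal =
      ∑ i, (π i : ℂ) • (A i).map Complex.ofReal := by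
    ext j k
    simp [Matrix.sum_apply]
  obtain ⟨ν, hν, rfl⟩ := Matrix.exists_mem_spectrum_of_mem_spectrum_sum_smul
    (fun i j => Commute.map (hcomm i j) Complex.ofRealHom.mapMatrix) _ (hmap ▸ hμ)
  simp_rw [← Complex.real_smul]
  exact (convex_halfSpace_re_lt 0).sum_mem (fun i _ => hπ i) hsum fun i _ => hhur i _ (hν i)
end
end

section
/- For every λ > 0 and every θ ∈ (−π/2, 0), the quantity H(θ;λ) = exp(−2λ cot(2θ)) ∫_θ^0 exp(2λ cot(2y)) sec²(y) dy satisfies 0 < H(θ;λ) < sin²(θ)/λ. -/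
/-!
Write `E(y) = exp (2λ cot 2y)`. Then `E' = -λ E sec² csc²`, so the integrand of `H` is
`sin² y · (-E'(y) / λ)`. As `sin²` decreases on `(-π/2, 0)` and `E(y) → 0` when `y → 0⁻`,
comparing with `-sin² θ · E' / λ` gives `∫_θ^0 E sec² ≤ sin² θ · E(θ) / λ`, which is
`H(θ; λ) ≤ sin² θ / λ`. Splitting the integral at `θ / 2` and using the smaller bound
`sin² (θ / 2)` on `[θ / 2, 0]` makes the inequality strict.
-/

open MeasureTheory ProbabilityTheory Matrix Filter Set
open scoped RealInnerProductSpace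

noncomputable section

/-- `H(θ; λ) = exp(-2 λ cot(2θ)) ∫_θ^0 exp(2 λ cot(2y)) sec²(y) dy`. -/
def Hfun (lam θ : ℝ) : ℝ :=
  Real.exp (-2 * lam * Real.cot (2 * θ)) *
    ∫ y in θ..0, Real.exp (2 * lam * Real.cot (2 * y)) / Real.cos y ^ 2

/-- The unnormalized invariant density `p̃₀(θ; λ) = λ csc²(θ) H(θ; λ)`. -/
def p0t (lam θ : ℝ) : ℝ := lam * (1 / Real.sin θ ^ 2) * Hfun lam θ

/-- The unnormalized invariant density `p̃₁(θ; λ) = sec²(θ)(1 - λ H(θ; λ))`. -/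
def p1t (lam θ : ℝ) : ℝ := (1 / Real.cos θ ^ 2) * (1 - lam * Hfun lam θ)

open Real Topology

lemma sin_neg_of_mem_Ioo {y : ℝ} (hy : y ∈ Ioo (-(π / 2)) 0) : sin y < 0 :=
  sin_neg_of_neg_of_neg_pi_lt hy.2 (by linarith [hy.1, pi_pos])

lemma sin_sq_lt_sin_sq {x y : ℝ} (hx : -(π / 2) ≤ x) (hxy : x < y) (hy : y ≤ 0) :
    sin y ^ 2 < sin x ^ 2 := by
  have hlt : sin x < sin y :=
    strictMonoOn_sin ⟨hx, by linarith [pi_pos]⟩ ⟨by linarith, by linarith [pi_pos]⟩ hxy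
  have hy0 : sin y ≤ 0 := sin_nonpos_of_nonpos_of_neg_pi_le hy (by linarith [pi_pos])
  nlinarith

lemma hasDerivAt_exp_two_mul_cot (lam : ℝ) {y : ℝ} (hs : sin y ≠ 0) (hc : cos y ≠ 0) :
    HasDerivAt (fun y => exp (2 * lam * cot (2 * y)))
      (-(lam * exp (2 * lam * cot (2 * y)) / (sin y ^ 2 * cos y ^ 2))) y := by
  have hs2 : sin (2 * y) ≠ 0 := by rw [sin_two_mul]; positivity
  have h2 : HasDerivAt (fun y : ℝ => 2 * y) 2 y := by simpa using (hasDerivAt_id y).const_mul 2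
  have hcot : HasDerivAt (fun y => cot (2 * y)) (-2 / sin (2 * y) ^ 2) y := by
    simp only [cot_eq_cos_div_sin]
    refine (h2.cos.div h2.sin hs2).congr_deriv ?_
    congr 1
    linear_combination (-2) * sin_sq_add_cos_sq (2 * y)
  convert (hcot.const_mul (2 * lam)).exp using 1
  rw [sin_two_mul]
  field_simp

lemma tendsto_exp_two_mul_cot_nhdsLT_zero {lam : ℝ} (hlam : 0 < lam) :
    Tendsto (fun y => exp (2 * lam * cot (2 * y))) (𝓝[<] 0) (𝓝 0) := by
  have hsin : Tendsto (fun y => sin (2 * y)) (𝓝[<] 0) (𝓝[<] 0) := by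
    refine tendsto_nhdsWithin_of_tendsto_nhds_of_eventually_within _
      (((by fun_prop : Continuous fun y : ℝ => sin (2 * y)).tendsto' 0 0 (by simp)).mono_left
        nhdsWithin_le_nhds) ?_
    filter_upwards [Ioo_mem_nhdsLT (neg_lt_zero.2 (half_pos pi_pos))] with y hy
    exact sin_neg_of_neg_of_neg_pi_lt (by linarith [hy.2]) (by linarith [hy.1])
  have hcos : Tendsto (fun y => cos (2 * y)) (𝓝[<] 0) (𝓝 1) :=
    ((by fun_prop : Continuous fun y : ℝ => cos (2 * y)).tendsto' 0 1 (by simp)).mono_left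
      nhdsWithin_le_nhds
  have hcot : Tendsto (fun y => 2 * lam * cot (2 * y)) (𝓝[<] 0) atBot := by
    simp only [cot_eq_cos_div_sin, div_eq_mul_inv]
    exact ((hcos.pos_mul_atBot one_pos (tendsto_inv_nhdsLT_zero.comp hsin)).const_mul_atBot
      (by positivity))
  exact tendsto_exp_atBot.comp hcot

/-- Extended by `0` on `[0, ∞)`, so as to be continuous at `0` from the left: with Lean's
`cot 0 = 0`, the formula itself would take the value `1` at `0`. -/
def expCot (lam : ℝ) : ℝ → ℝ := (Iio 0).indicator fun y => exp (2 * lam * cot (2 * y))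

lemma hasDerivAt_expCot (lam : ℝ) {y : ℝ} (hy : y ∈ Ioo (-(π / 2)) 0) :
    HasDerivAt (expCot lam)
      (-(lam * exp (2 * lam * cot (2 * y)) / (sin y ^ 2 * cos y ^ 2))) y := by
  have hc : cos y ≠ 0 := (cos_pos_of_mem_Ioo ⟨hy.1, by linarith [hy.2, pi_pos]⟩).ne'
  refine (hasDerivAt_exp_two_mul_cot lam (sin_neg_of_mem_Ioo hy).ne hc).congr_of_eventuallyEq ?_
  filter_upwards [Iio_mem_nhds hy.2] with x hx
  exact indicator_of_mem hx _

lemma continuousOn_expCot {lam : ℝ} (hlam : 0 < lam) :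
    ContinuousOn (expCot lam) (Ioc (-(π / 2)) 0) := by
  intro y hy
  rcases hy.2.lt_or_eq with hy0 | rfl
  · exact (hasDerivAt_expCot lam ⟨hy.1, hy0⟩).continuousAt.continuousWithinAt
  · refine (continuousWithinAt_Iio_iff_Iic.1 ?_).mono Ioc_subset_Iic_self
    have : expCot lam 0 = 0 := by simp [expCot]
    rw [ContinuousWithinAt, this]
    exact (tendsto_exp_two_mul_cot_nhdsLT_zero hlam).congr'
      (eventually_nhdsWithin_of_forall fun x hx => (indicator_of_mem hx _).symm)

lemma exp_two_mul_cot_div_cos_sq_le {lam s y : ℝ} (hlam : 0 < lam) (hy : sin y ≠ 0)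
    (hs : sin y ^ 2 ≤ s) :
    exp (2 * lam * cot (2 * y)) / cos y ^ 2 ≤
      s / lam * (lam * exp (2 * lam * cot (2 * y)) / (sin y ^ 2 * cos y ^ 2)) :=
  calc exp (2 * lam * cot (2 * y)) / cos y ^ 2
      = sin y ^ 2 * (exp (2 * lam * cot (2 * y)) / (sin y ^ 2 * cos y ^ 2)) := by
        field_simp
    _ ≤ s * (exp (2 * lam * cot (2 * y)) / (sin y ^ 2 * cos y ^ 2)) := by gcongr
    _ = s / lam * (lam * exp (2 * lam * cot (2 * y)) / (sin y ^ 2 * cos y ^ 2)) := by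
        field_simp

variable {lam a b : ℝ}

lemma integrableOn_Icc_exp_two_mul_cot_div_cos_sq (hlam : 0 < lam) (ha : -(π / 2) < a)
    (hb : b ≤ 0) :
    IntegrableOn (fun y => exp (2 * lam * cot (2 * y)) / cos y ^ 2) (Icc a b) := by
  have hIoo : ∀ y ∈ Ioo a b, y ∈ Ioo (-(π / 2)) 0 :=
    fun y hy => ⟨ha.trans hy.1, hy.2.trans_le hb⟩
  have hderiv : IntegrableOn
      (fun y => lam * exp (2 * lam * cot (2 * y)) / (sin y ^ 2 * cos y ^ 2)) (Ioc a b) :=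
    intervalIntegral.integrableOn_deriv_of_nonneg
      ((continuousOn_expCot hlam).mono fun y hy => ⟨ha.trans_le hy.1, hy.2.trans hb⟩).neg
      (fun y hy => by simpa using (hasDerivAt_expCot lam (hIoo y hy)).neg)
      (fun y _ => by positivity)
  rw [integrableOn_Icc_iff_integrableOn_Ioo]
  refine ((hderiv.mono_set Ioo_subset_Ioc_self).const_mul (1 / lam)).mono'
    (Measurable.aestronglyMeasurable (by simp only [cot_eq_cos_div_sin]; fun_prop)) ?_
  refine (ae_restrict_iff' measurableSet_Ioo).2 (ae_of_all _ fun y hy => ?_)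
  rw [norm_of_nonneg (by positivity)]
  exact exp_two_mul_cot_div_cos_sq_le hlam (sin_neg_of_mem_Ioo (hIoo y hy)).ne (sin_sq_le_one y)

lemma integral_exp_two_mul_cot_div_cos_sq_le {s : ℝ} (hlam : 0 < lam) (ha : -(π / 2) < a)
    (hab : a ≤ b) (hb : b ≤ 0) (hs : ∀ y ∈ Ioo a b, sin y ^ 2 ≤ s) :
    ∫ y in a..b, exp (2 * lam * cot (2 * y)) / cos y ^ 2 ≤
      s / lam * (expCot lam a - expCot lam b) := by
  have hIoo : ∀ y ∈ Ioo a b, y ∈ Ioo (-(π / 2)) 0 :=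
    fun y hy => ⟨ha.trans hy.1, hy.2.trans_le hb⟩
  have hFTC := intervalIntegral.integral_le_sub_of_hasDeriv_right_of_le hab
    (continuousOn_const (c := -(s / lam)) |>.mul
      ((continuousOn_expCot hlam).mono fun y hy => ⟨ha.trans_le hy.1, hy.2.trans hb⟩))
    (fun y hy => ((hasDerivAt_expCot lam (hIoo y hy)).const_mul (-(s / lam))).hasDerivWithinAt)
    (integrableOn_Icc_exp_two_mul_cot_div_cos_sq hlam ha hb)
    (fun y hy => by
      rw [neg_mul_neg]
      exact exp_two_mul_cot_div_cos_sq_le hlam (sin_neg_of_mem_Ioo (hIoo y hy)).ne (hs y hy))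
  simp only [Pi.mul_apply] at hFTC
  linarith

lemma integral_exp_two_mul_cot_div_cos_sq_lt {θ : ℝ} (hlam : 0 < lam)
    (hθ : θ ∈ Ioo (-(π / 2)) 0) :
    ∫ y in θ..0, exp (2 * lam * cot (2 * y)) / cos y ^ 2 <
      sin θ ^ 2 / lam * exp (2 * lam * cot (2 * θ)) := by
  obtain ⟨hθ₁, hθ₂⟩ := hθ
  set m := θ / 2 with hm_def
  have hθm : θ < m := by linarith [hm_def]
  have hm : -(π / 2) < m ∧ m < 0 := ⟨by linarith [hm_def], by linarith [hm_def]⟩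
  have hleft := integral_exp_two_mul_cot_div_cos_sq_le hlam hθ₁ hθm.le hm.2.le
    fun y hy => (sin_sq_lt_sin_sq hθ₁.le hy.1 (hy.2.trans hm.2).le).le
  have hright := integral_exp_two_mul_cot_div_cos_sq_le hlam hm.1 hm.2.le le_rfl
    fun y hy => (sin_sq_lt_sin_sq hm.1.le hy.1 hy.2.le).le
  have hsplit := intervalIntegral.integral_add_adjacent_intervals
    ((intervalIntegrable_iff_integrableOn_Icc_of_le hθm.le).2
      (integrableOn_Icc_exp_two_mul_cot_div_cos_sq hlam hθ₁ hm.2.le))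
    ((intervalIntegrable_iff_integrableOn_Icc_of_le hm.2.le).2
      (integrableOn_Icc_exp_two_mul_cot_div_cos_sq hlam hm.1 le_rfl))
  have hθE : expCot lam θ = exp (2 * lam * cot (2 * θ)) := by simp [expCot, hθ₂]
  have hmE : expCot lam m = exp (2 * lam * cot (2 * m)) := by simp [expCot, hm.2]
  have h0E : expCot lam 0 = 0 := by simp [expCot]
  have hgain : sin m ^ 2 / lam * expCot lam m < sin θ ^ 2 / lam * expCot lam m := by
    rw [hmE]
    gcongr ?_ / _ * _
    exact sin_sq_lt_sin_sq hθ₁.le hθm hm.2.le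
  rw [h0E] at hright
  rw [← hsplit, ← hθE]
  linarith

/-- For `λ > 0` and `θ ∈ (-π/2, 0)` one has `0 < H(θ; λ) < sin²(θ)/λ`. -/
theorem H_bounds (lam : ℝ) (hlam : 0 < lam) (θ : ℝ)
    (hθ : θ ∈ Set.Ioo (-(Real.pi / 2)) (0 : ℝ)) :
    0 < Hfun lam θ ∧ Hfun lam θ < Real.sin θ ^ 2 / lam := by
  have hI : 0 < ∫ y in θ..0, exp (2 * lam * cot (2 * y)) / cos y ^ 2 :=
    intervalIntegral.intervalIntegral_pos_of_pos_on
      ((intervalIntegrable_iff_integrableOn_Icc_of_le hθ.2.le).2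
        (integrableOn_Icc_exp_two_mul_cot_div_cos_sq hlam hθ.1 le_rfl))
      (fun y hy => div_pos (exp_pos _)
        (pow_pos (cos_pos_of_mem_Ioo ⟨hθ.1.trans hy.1, by linarith [hy.2, pi_pos]⟩) 2))
      hθ.2
  have hexp : exp (-2 * lam * cot (2 * θ)) * exp (2 * lam * cot (2 * θ)) = 1 := by
    rw [← exp_add, ← exp_zero]; ring_nf
  refine ⟨mul_pos (exp_pos _) hI, ?_⟩
  calc Hfun lam θ
      < exp (-2 * lam * cot (2 * θ)) * (sin θ ^ 2 / lam * exp (2 * lam * cot (2 * θ))) :=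
        mul_lt_mul_of_pos_left (integral_exp_two_mul_cot_div_cos_sq_lt hlam hθ) (exp_pos _)
    _ = sin θ ^ 2 / lam := by linear_combination (sin θ ^ 2 / lam) * hexp
end
end

section
/- For every λ > 0, the function θ ↦ (p̃_0(θ;λ) − p̃_1(θ;λ)) cos(θ) sin(θ) is integrable on (−π/2, 0) and its integral is strictly positive: ∫_{−π/2}^0 (p̃_0(θ;λ) − p̃_1(θ;λ)) cos(θ) sin(θ) dθ > 0. -/
open MeasureTheory ProbabilityTheory Matrix Filter Set
open scoped RealInnerProductSpace

noncomputable section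

/-!
Write `w(y) = exp(2λ cot 2y)`. Since `(w sin²)' = -(λ w sec² + w (-sin 2y))` on `(-π/2, 0)` and
`w sin² → 0` at `0⁻`, integrating gives `λ H(θ) = sin²θ - D(θ)` with
`D(θ) = w(θ)⁻¹ ∫_θ^0 w(y) (-sin 2y) dy > 0`, and the integrand becomes `2 D(θ) / (-sin 2θ) > 0`.

Integrability near `-π/2` comes from the equation `D' = sin 2θ + 4λ D / sin² 2θ`: the function
`M(θ) = 3θ - D(θ) sin 2θ` has `M' = 2λ · integrand + (3 - 2 D cos 2θ - sin² 2θ) ≥ 2λ · integrand`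
because `0 < D ≤ sin²θ`, and `M` is continuous on `[-π/2, 0]`, so its nonnegative derivative is
integrable. The same principle, applied to `-w sin²`, gives integrability of the pieces of `H`.
-/

theorem ContinuousWithinAt.of_norm_le {α E F : Type*} [TopologicalSpace α] [NormedAddCommGroup E]
    [SeminormedAddCommGroup F] {f : α → E} {g : α → F} {s : Set α} {a : α} (ha : a ∈ s)
    (hg : ContinuousWithinAt g s a) (hga : g a = 0) (hfg : ∀ x ∈ s, ‖f x‖ ≤ ‖g x‖) :
    ContinuousWithinAt f s a := by
  have hfa : f a = 0 := norm_le_zero_iff.mp (by simpa [hga] using hfg a ha)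
  rw [ContinuousWithinAt, hfa]
  refine squeeze_zero_norm' (eventually_nhdsWithin_of_forall hfg) ?_
  have hlim := hg.norm
  rwa [ContinuousWithinAt, hga, norm_zero] at hlim

namespace Real

theorem hasDerivAt_cot {x : ℝ} (hx : sin x ≠ 0) : HasDerivAt cot (-1 / sin x ^ 2) x := by
  rw [funext cot_eq_cos_div_sin]
  refine ((hasDerivAt_cos x).div (hasDerivAt_sin x) hx).congr_deriv ?_
  rw [← sin_sq_add_cos_sq x]
  ring

@[fun_prop]
theorem measurable_cot : Measurable cot := by
  rw [funext cot_eq_cos_div_sin]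
  fun_prop

end Real

namespace GIntegrand

open Real

def weight (lam y : ℝ) : ℝ := exp (2 * lam * cot (2 * y))

def defect (lam θ : ℝ) : ℝ := (∫ y in θ..0, weight lam y * -sin (2 * y)) / weight lam θ

variable {lam θ : ℝ}

theorem weight_pos (lam y : ℝ) : 0 < weight lam y := exp_pos _

@[fun_prop]
theorem measurable_weight (lam : ℝ) : Measurable (weight lam) := by
  unfold weight; fun_prop

theorem hasDerivAt_weight (lam : ℝ) {y : ℝ} (hy : sin (2 * y) ≠ 0) :
    HasDerivAt (weight lam) (-(4 * lam) / sin (2 * y) ^ 2 * weight lam y) y := by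
  have h2 : HasDerivAt (fun y : ℝ => 2 * y) 2 y := by
    simpa using (hasDerivAt_id y).const_mul (2 : ℝ)
  refine (((hasDerivAt_cot hy).comp y h2).const_mul (2 * lam)).exp.congr_deriv ?_
  simp only [weight, Function.comp_def]
  ring

theorem weight_le_one (hlam : 0 ≤ lam) {y : ℝ} (hy : y ∈ Icc (-(π / 4)) 0) : weight lam y ≤ 1 := by
  refine exp_le_one_iff.mpr (mul_nonpos_of_nonneg_of_nonpos (by positivity) ?_)
  rw [cot_eq_cos_div_sin]
  exact div_nonpos_of_nonneg_of_nonpos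
    (cos_nonneg_of_mem_Icc ⟨by linarith [hy.1], by linarith [hy.2, pi_pos]⟩)
    (sin_nonpos_of_nonpos_of_neg_pi_le (by linarith [hy.2]) (by linarith [hy.1, pi_pos]))

theorem sin_two_mul_neg {y : ℝ} (hy : y ∈ Ioo (-(π / 2)) 0) : sin (2 * y) < 0 :=
  sin_neg_of_neg_of_neg_pi_lt (by linarith [hy.2]) (by linarith [hy.1])

theorem hasDerivAt_weight_mul_sin_sq (lam : ℝ) {y : ℝ} (hy : y ∈ Ioo (-(π / 2)) 0) :
    HasDerivAt (fun y => weight lam y * sin y ^ 2)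
      (-(lam * (weight lam y / cos y ^ 2) + weight lam y * -sin (2 * y))) y := by
  have hs : sin (2 * y) ≠ 0 := (sin_two_mul_neg hy).ne
  have hc : cos y ≠ 0 := (cos_pos_of_mem_Ioo ⟨hy.1, by linarith [hy.2, pi_pos]⟩).ne'
  refine ((hasDerivAt_weight lam hs).mul ((hasDerivAt_sin y).pow 2)).congr_deriv ?_
  have hsy : sin y ≠ 0 := (sin_neg_of_neg_of_neg_pi_lt hy.2 (by linarith [hy.1, pi_pos])).ne
  simp only [Pi.pow_apply, sin_two_mul]
  field_simp
  ring

theorem continuousOn_weight_mul_sin_sq (hlam : 0 ≤ lam) (hθ : -(π / 2) < θ) :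
    ContinuousOn (fun y => weight lam y * sin y ^ 2) (Icc θ 0) := by
  have hπ := pi_pos
  intro y hy
  rcases hy.2.lt_or_eq with hy0 | rfl
  · exact (hasDerivAt_weight_mul_sin_sq lam ⟨by linarith [hy.1], hy0⟩).continuousAt
      |>.continuousWithinAt
  have hzero : ContinuousWithinAt (fun y => weight lam y * sin y ^ 2) (Icc (-(π / 4)) 0) 0 := by
    refine ContinuousWithinAt.of_norm_le (right_mem_Icc.mpr (by linarith))
      (continuous_sin.pow 2).continuousWithinAt (by simp) fun x hx => ?_
    rw [norm_mul, Real.norm_of_nonneg (weight_pos lam x).le]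
    exact mul_le_of_le_one_left (abs_nonneg _) (weight_le_one hlam hx)
  exact ((continuousWithinAt_Icc_iff_Iic (by linarith)).mp hzero).mono Icc_subset_Iic_self

theorem intervalIntegrable_lam_mul_weight_div_cos_sq_and_weight_mul_sin (hlam : 0 < lam)
    (hθ : θ ∈ Ioo (-(π / 2)) 0) :
    IntervalIntegrable (fun y => lam * (weight lam y / cos y ^ 2)) volume θ 0 ∧
      IntervalIntegrable (fun y => weight lam y * -sin (2 * y)) volume θ 0 := by
  have hterms : ∀ y ∈ Ioc θ 0,
      0 ≤ lam * (weight lam y / cos y ^ 2) ∧ 0 ≤ weight lam y * -sin (2 * y) :=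
    fun y hy => ⟨by have := weight_pos lam y; positivity,
      mul_nonneg (weight_pos lam y).le (neg_nonneg.mpr (sin_nonpos_of_nonpos_of_neg_pi_le
        (by linarith [hy.2]) (by linarith [hy.1, hθ.1])))⟩
  have hsum : IntegrableOn
      (fun y => lam * (weight lam y / cos y ^ 2) + weight lam y * -sin (2 * y)) (Ioc θ 0) :=
    intervalIntegral.integrableOn_deriv_of_nonneg (continuousOn_weight_mul_sin_sq hlam.le hθ.1).neg
      (fun y hy => (hasDerivAt_weight_mul_sin_sq lam ⟨by linarith [hy.1, hθ.1], hy.2⟩).neg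
        |>.congr_deriv (neg_neg _))
      (fun y hy => add_nonneg (hterms y (Ioo_subset_Ioc_self hy)).1
        (hterms y (Ioo_subset_Ioc_self hy)).2)
  have dominated (f : ℝ → ℝ) (hf : Measurable f)
      (hfg : ∀ y ∈ Ioc θ 0,
        0 ≤ f y ∧ f y ≤ lam * (weight lam y / cos y ^ 2) + weight lam y * -sin (2 * y)) :
      IntervalIntegrable f volume θ 0 := by
    rw [intervalIntegrable_iff_integrableOn_Ioc_of_le hθ.2.le]
    refine hsum.mono' hf.aestronglyMeasurable
      ((ae_restrict_iff' measurableSet_Ioc).mpr (ae_of_all _ fun y hy => ?_))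
    rw [Real.norm_of_nonneg (hfg y hy).1]
    exact (hfg y hy).2
  exact ⟨dominated _ (by fun_prop) fun y hy => ⟨(hterms y hy).1, by linarith [hterms y hy]⟩,
    dominated _ (by fun_prop) fun y hy => ⟨(hterms y hy).2, by linarith [hterms y hy]⟩⟩

theorem lam_mul_integral_weight_div_cos_sq (hlam : 0 < lam) (hθ : θ ∈ Ioo (-(π / 2)) 0) :
    lam * ∫ y in θ..0, weight lam y / cos y ^ 2
      = weight lam θ * sin θ ^ 2 - ∫ y in θ..0, weight lam y * -sin (2 * y) := by
  obtain ⟨hf0, hf1⟩ := intervalIntegrable_lam_mul_weight_div_cos_sq_and_weight_mul_sin hlam hθ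
  have hftc := intervalIntegral.integral_eq_sub_of_hasDerivAt_of_le hθ.2.le
    (continuousOn_weight_mul_sin_sq hlam.le hθ.1)
    (fun y hy => hasDerivAt_weight_mul_sin_sq lam ⟨by linarith [hy.1, hθ.1], hy.2⟩)
    (hf0.add hf1).neg
  rw [intervalIntegral.integral_neg, intervalIntegral.integral_add hf0 hf1,
    intervalIntegral.integral_const_mul] at hftc
  rw [sin_zero, zero_pow two_ne_zero, mul_zero, zero_sub] at hftc
  linarith

theorem lam_mul_Hfun (hlam : 0 < lam) (hθ : θ ∈ Ioo (-(π / 2)) 0) :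
    lam * Hfun lam θ = sin θ ^ 2 - defect lam θ := by
  have hw := (weight_pos lam θ).ne'
  have hexp : exp (-2 * lam * cot (2 * θ)) = (weight lam θ)⁻¹ := by
    rw [weight, ← exp_neg]; ring_nf
  change lam * (exp _ * ∫ y in θ..0, weight lam y / cos y ^ 2) = _
  rw [hexp, mul_left_comm, lam_mul_integral_weight_div_cos_sq hlam hθ, defect]
  field_simp

theorem defect_pos (hlam : 0 < lam) (hθ : θ ∈ Ioo (-(π / 2)) 0) : 0 < defect lam θ := by
  refine div_pos (intervalIntegral.intervalIntegral_pos_of_pos_on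
    (intervalIntegrable_lam_mul_weight_div_cos_sq_and_weight_mul_sin hlam hθ).2
    (fun y hy => ?_) hθ.2) (weight_pos lam θ)
  exact mul_pos (weight_pos lam y) (neg_pos.mpr (sin_two_mul_neg ⟨by linarith [hy.1, hθ.1], hy.2⟩))

theorem defect_le_sin_sq (hlam : 0 < lam) (hθ : θ ∈ Ioo (-(π / 2)) 0) :
    defect lam θ ≤ sin θ ^ 2 := by
  have hH : 0 ≤ lam * Hfun lam θ := by
    refine mul_nonneg hlam.le (mul_nonneg (exp_pos _).le
      (intervalIntegral.integral_nonneg hθ.2.le fun y _ => by positivity))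
  linarith [lam_mul_Hfun hlam hθ]

def integrand (lam θ : ℝ) : ℝ := (p0t lam θ - p1t lam θ) * cos θ * sin θ

theorem integrand_eq (hlam : 0 < lam) (hθ : θ ∈ Ioo (-(π / 2)) 0) :
    integrand lam θ = 2 * defect lam θ / -sin (2 * θ) := by
  have hs : sin θ ≠ 0 := (sin_neg_of_neg_of_neg_pi_lt hθ.2 (by linarith [hθ.1, pi_pos])).ne
  have hc : cos θ ≠ 0 := (cos_pos_of_mem_Ioo ⟨hθ.1, by linarith [hθ.2, pi_pos]⟩).ne'
  have hH := lam_mul_Hfun hlam hθ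
  rw [integrand, p0t, p1t, mul_comm lam, mul_assoc (1 / sin θ ^ 2), hH, sin_two_mul]
  field_simp
  linear_combination (sin θ ^ 2 - defect lam θ) * sin_sq_add_cos_sq θ

theorem hasDerivAt_defect (hlam : 0 < lam) (hθ : θ ∈ Ioo (-(π / 2)) 0) :
    HasDerivAt (defect lam) (sin (2 * θ) + 4 * lam * defect lam θ / sin (2 * θ) ^ 2) θ := by
  have hs := (sin_two_mul_neg hθ).ne
  have hw := (weight_pos lam θ).ne'
  have hk : ContinuousAt (fun y => weight lam y * -sin (2 * y)) θ :=
    (hasDerivAt_weight lam hs).continuousAt.mul (by fun_prop)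
  have hmeas : Measurable fun y => weight lam y * -sin (2 * y) := by fun_prop
  have hK := intervalIntegral.integral_hasDerivAt_left
    (intervalIntegrable_lam_mul_weight_div_cos_sq_and_weight_mul_sin hlam hθ).2
    hmeas.stronglyMeasurable.stronglyMeasurableAtFilter hk
  refine (hK.div (hasDerivAt_weight lam hs) hw).congr_deriv ?_
  rw [defect]
  field_simp
  ring

theorem sin_two_mul_eq_zero_of_notMem_Ioo (hθ : θ ∈ Icc (-(π / 2)) 0)
    (hθ' : θ ∉ Ioo (-(π / 2)) 0) : sin (2 * θ) = 0 := by
  rcases eq_endpoints_or_mem_Ioo_of_mem_Icc hθ with rfl | rfl | h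
  · simp [mul_div_cancel₀]
  · simp
  · exact absurd h hθ'

theorem abs_sin_two_mul_mul_defect_le (hlam : 0 < lam) (hθ : θ ∈ Icc (-(π / 2)) 0) :
    |sin (2 * θ) * defect lam θ| ≤ |sin (2 * θ)| := by
  by_cases hθ' : θ ∈ Ioo (-(π / 2)) 0
  · rw [abs_mul]
    refine mul_le_of_le_one_right (abs_nonneg _) (abs_le.mpr ⟨?_, ?_⟩)
    · linarith [defect_pos hlam hθ']
    · nlinarith [defect_le_sin_sq hlam hθ', sin_sq_le_one θ]
  -- at the endpoints `defect` is a junk value, but it is multiplied by `sin (2 * θ) = 0`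
  · simp [sin_two_mul_eq_zero_of_notMem_Ioo hθ hθ']

theorem integrand_pos (hlam : 0 < lam) (hθ : θ ∈ Ioo (-(π / 2)) 0) : 0 < integrand lam θ := by
  rw [integrand_eq hlam hθ]
  exact div_pos (mul_pos two_pos (defect_pos hlam hθ)) (neg_pos.mpr (sin_two_mul_neg hθ))

def majorant (lam θ : ℝ) : ℝ := 3 * θ - sin (2 * θ) * defect lam θ

theorem hasDerivAt_majorant (hlam : 0 < lam) (hθ : θ ∈ Ioo (-(π / 2)) 0) :
    HasDerivAt (majorant lam)
      (2 * lam * integrand lam θ + (3 - 2 * cos (2 * θ) * defect lam θ - sin (2 * θ) ^ 2)) θ := by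
  have hs := (sin_two_mul_neg hθ).ne
  have h2 : HasDerivAt (fun θ : ℝ => 2 * θ) 2 θ := by
    simpa using (hasDerivAt_id θ).const_mul (2 : ℝ)
  have h3 : HasDerivAt (fun θ : ℝ => 3 * θ) 3 θ := by
    simpa using (hasDerivAt_id θ).const_mul (3 : ℝ)
  refine (h3.sub (((hasDerivAt_sin _).comp θ h2).mul (hasDerivAt_defect hlam hθ))).congr_deriv ?_
  rw [integrand_eq hlam hθ]
  simp only [Function.comp_def]
  field_simp
  ring

theorem continuousOn_majorant (hlam : 0 < lam) :
    ContinuousOn (majorant lam) (Icc (-(π / 2)) 0) := by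
  refine (continuousOn_id.const_smul (3 : ℝ)).sub fun θ hθ => ?_
  by_cases hθ' : θ ∈ Ioo (-(π / 2)) 0
  · exact ((by fun_prop : Continuous fun θ : ℝ => sin (2 * θ)).continuousAt.mul
      (hasDerivAt_defect hlam hθ').continuousAt).continuousWithinAt
  · exact ContinuousWithinAt.of_norm_le (g := fun θ => sin (2 * θ)) hθ (by fun_prop)
      (sin_two_mul_eq_zero_of_notMem_Ioo hθ hθ') fun x hx => by
        simpa only [Real.norm_eq_abs] using abs_sin_two_mul_mul_defect_le hlam hx

theorem intervalIntegrable_integrand (hlam : 0 < lam) :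
    IntervalIntegrable (integrand lam) volume (-(π / 2)) 0 := by
  have hπ := pi_pos
  have hrem : ∀ θ ∈ Ioo (-(π / 2)) 0,
      0 ≤ 3 - 2 * cos (2 * θ) * defect lam θ - sin (2 * θ) ^ 2 := fun θ hθ => by
    nlinarith [defect_pos hlam hθ, defect_le_sin_sq hlam hθ, sin_sq_le_one θ,
      sin_sq_le_one (2 * θ), abs_le.mp (abs_cos_le_one (2 * θ))]
  have hM := intervalIntegral.integrableOn_deriv_of_nonneg (continuousOn_majorant hlam)
    (fun θ hθ => hasDerivAt_majorant hlam hθ)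
    (fun θ hθ => add_nonneg (by have := integrand_pos hlam hθ; positivity) (hrem θ hθ))
  have hcont : ContinuousOn (integrand lam) (Ioo (-(π / 2)) 0) := by
    refine ContinuousOn.congr (fun θ hθ => ?_) (fun θ hθ => integrand_eq hlam hθ)
    exact ((hasDerivAt_defect hlam hθ).continuousAt.continuousWithinAt.const_mul 2).div
      (by fun_prop) (neg_ne_zero.mpr (sin_two_mul_neg hθ).ne)
  rw [intervalIntegrable_iff_integrableOn_Ioo_of_le (by linarith)]
  refine ((hM.mono_set Ioo_subset_Ioc_self).div_const (2 * lam)).mono'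
    (hcont.aestronglyMeasurable measurableSet_Ioo) ?_
  refine (ae_restrict_iff' measurableSet_Ioo).mpr (ae_of_all _ fun θ hθ => ?_)
  rw [Real.norm_of_nonneg (integrand_pos hlam hθ).le, le_div_iff₀ (by positivity)]
  linarith [hrem θ hθ]

end GIntegrand

/-- The function `θ ↦ (p̃₀(θ;λ) - p̃₁(θ;λ)) cos θ sin θ` is integrable on `(-π/2, 0)` and
its integral is strictly positive. -/
theorem G_integrand_integrable_pos (lam : ℝ) (hlam : 0 < lam) :
    IntervalIntegrable (fun θ => (p0t lam θ - p1t lam θ) * Real.cos θ * Real.sin θ)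
      MeasureTheory.volume (-(Real.pi / 2)) 0 ∧
    0 < ∫ θ in (-(Real.pi / 2))..0, (p0t lam θ - p1t lam θ) * Real.cos θ * Real.sin θ := by
  have hint := GIntegrand.intervalIntegrable_integrand hlam
  exact ⟨hint, intervalIntegral.intervalIntegral_pos_of_pos_on hint
    (fun θ hθ => GIntegrand.integrand_pos hlam hθ) (by linarith [Real.pi_pos])⟩
end
end
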